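/- For every G ∈ ℝ^{3×3}, the limit lim_{t→0} dist(Id + tG, SO(3))/|t| exists and equals |sym G|, where sym G = (G + Gᵀ)/2 and dist is taken with respect to the Frobenius norm. -/

import Mathlib

open Matrix Filter

abbrev M3 := Matrix (Fin 3) (Fin 3) ℝ

noncomputable def frob (A : M3) : ℝ := Real.sqrt (∑ i, ∑ j, (A i j) ^ 2)

def SO3 (R : M3) : Prop := Rᵀ * R = 1 ∧ R.det = 1

noncomputable def distSO (F : M3) : ℝ := sInf ((fun R => frob (F - R)) '' {R | SO3 R})

noncomputable def symPart (F : M3) : M3 := (1 / 2 : ℝ) • (F + Fᵀ)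

/-!
Split `G = S + W` into symmetric and skew parts. The rotation `exp (t W)` shows
`dist (1 + t G, SO(3)) ≤ |t| |S| + o(t)`. Conversely, for orthogonal `R` the symmetric part of
`R - 1` is `-(1/2) (R - 1)ᵀ (R - 1)`, quadratic in `R - 1`. Symmetrization is a contraction, so
`|1 + t G - R| ≥ |t S - sym (R - 1)| ≥ |t| |S| - O(t²)` when `R` is within `O(|t|)` of `1`, and
the bound `|1 + t G - R| ≥ |t| |G| ≥ |t| |S|` holds trivially otherwise.
-/

open NormedSpace Asymptotics Topology

attribute [local instance] Matrix.frobeniusNormedRing Matrix.frobeniusNormedAlgebra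

lemma frob_eq_norm (A : M3) : frob A = ‖A‖ := by
  rw [frobenius_norm_def, ← Real.sqrt_eq_rpow, frob]
  simp [sq_abs, Real.norm_eq_abs]

lemma distSO_eq_sInf_norm (F : M3) : distSO F = sInf ((fun R => ‖F - R‖) '' {R | SO3 R}) := by
  simp only [distSO, frob_eq_norm]

lemma distSO_le_norm_sub {R : M3} (F : M3) (hR : SO3 R) : distSO F ≤ ‖F - R‖ := by
  rw [distSO_eq_sInf_norm]
  exact csInf_le ⟨0, by rintro x ⟨R, -, rfl⟩; exact norm_nonneg _⟩ ⟨R, hR, rfl⟩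

lemma le_distSO {F : M3} {c : ℝ} (h : ∀ R, Rᵀ * R = 1 → c ≤ ‖F - R‖) : c ≤ distSO F := by
  rw [distSO_eq_sInf_norm]
  exact le_csInf ⟨_, 1, ⟨by simp, det_one⟩, rfl⟩ (by rintro x ⟨R, hR, rfl⟩; exact h R hR.1)

lemma norm_symPart_le (A : M3) : ‖symPart A‖ ≤ ‖A‖ := by
  calc ‖symPart A‖ ≤ 1 / 2 * (‖A‖ + ‖Aᵀ‖) := by
        rw [symPart, norm_smul, Real.norm_of_nonneg (by norm_num)]
        gcongr
        exact norm_add_le _ _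
    _ = ‖A‖ := by rw [frobenius_norm_transpose]; ring

lemma symPart_sub_one_of_orthogonal {R : M3} (hR : Rᵀ * R = 1) :
    symPart (R - 1) = -(1 / 2 : ℝ) • ((R - 1)ᵀ * (R - 1)) := by
  have : (R - 1)ᵀ * (R - 1) = -((R - 1) + (R - 1)ᵀ) := by
    rw [transpose_sub, transpose_one]
    calc (Rᵀ - 1) * (R - 1) = Rᵀ * R - R - Rᵀ + 1 := by noncomm_ring
      _ = _ := by rw [hR]; abel
  rw [this, symPart]
  module

lemma norm_one_add_smul_sub_ge (G : M3) (t : ℝ) {R : M3} (hR : Rᵀ * R = 1) :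
    |t| * ‖symPart G‖ - 2 * ‖G‖ ^ 2 * t ^ 2 ≤ ‖1 + t • G - R‖ := by
  set d := ‖1 + t • G - R‖
  have hsym_le := norm_symPart_le G
  have htG : ‖t • G‖ = |t| * ‖G‖ := by rw [norm_smul, Real.norm_eq_abs]
  rcases le_or_gt (|t| * ‖G‖) d with hfar | hnear
  · nlinarith [abs_nonneg t, sq_nonneg t]
  have hA : ‖R - 1‖ ≤ 2 * (|t| * ‖G‖) := by
    calc ‖R - 1‖ = ‖t • G - (1 + t • G - R)‖ := by congr 1; abel
      _ ≤ ‖t • G‖ + d := norm_sub_le _ _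
      _ ≤ 2 * (|t| * ‖G‖) := by linarith
  have hAtA : ‖(R - 1)ᵀ * (R - 1)‖ ≤ 4 * ‖G‖ ^ 2 * t ^ 2 := by
    calc ‖(R - 1)ᵀ * (R - 1)‖ ≤ ‖R - 1‖ * ‖R - 1‖ :=
          (norm_mul_le _ _).trans_eq (congrArg (· * _) (frobenius_norm_transpose _))
      _ ≤ (2 * (|t| * ‖G‖)) * (2 * (|t| * ‖G‖)) := by gcongr
      _ = 4 * ‖G‖ ^ 2 * t ^ 2 := by rw [← sq_abs t]; ring
  have hsym :
      symPart (1 + t • G - R) = t • symPart G + (1 / 2 : ℝ) • ((R - 1)ᵀ * (R - 1)) := by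
    rw [← neg_neg ((1 / 2 : ℝ) • _), ← neg_smul, ← symPart_sub_one_of_orthogonal hR]
    simp only [symPart, transpose_add, transpose_sub, transpose_smul, transpose_one]
    module
  calc |t| * ‖symPart G‖ - 2 * ‖G‖ ^ 2 * t ^ 2
      ≤ ‖t • symPart G‖ - ‖(1 / 2 : ℝ) • ((R - 1)ᵀ * (R - 1))‖ := by
        rw [norm_smul, norm_smul, Real.norm_eq_abs, Real.norm_of_nonneg (by norm_num)]
        linarith
    _ ≤ ‖symPart (1 + t • G - R)‖ := by rw [hsym]; exact norm_sub_le_norm_add _ _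
    _ ≤ d := norm_symPart_le _

lemma det_exp_pos {m : Type*} [Fintype m] [DecidableEq m] (A : Matrix m m ℝ) :
    0 < (exp A).det := by
  have hsplit : exp A = exp ((1 / 2 : ℝ) • A) * exp ((1 / 2 : ℝ) • A) := by
    rw [← exp_add_of_commute _ _ (Commute.refl _), ← add_smul]
    norm_num
  have hunit : IsUnit (exp ((1 / 2 : ℝ) • A)).det :=
    (isUnit_iff_isUnit_det (exp ((1 / 2 : ℝ) • A))).mp (Matrix.isUnit_exp _)
  rw [hsplit, det_mul, ← sq]
  exact sq_pos_of_ne_zero hunit.ne_zero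

lemma SO3_exp_of_transpose_eq_neg {W : M3} (hW : Wᵀ = -W) : SO3 (exp W) := by
  have horth : (exp W)ᵀ * exp W = 1 := by
    rw [← Matrix.exp_transpose, hW, ← Matrix.exp_add_of_commute _ _ (Commute.refl W).neg_left,
      neg_add_cancel, exp_zero]
  have hdet_sq : (exp W).det ^ 2 = 1 := by
    simpa only [det_mul, det_transpose, det_one, sq] using congrArg det horth
  refine ⟨horth, ?_⟩
  nlinarith [det_exp_pos W]

noncomputable def skewPart (F : M3) : M3 := (1 / 2 : ℝ) • (F - Fᵀ)

lemma transpose_skewPart (F : M3) : (skewPart F)ᵀ = -skewPart F := by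
  simp only [skewPart, transpose_smul, transpose_sub, transpose_transpose]
  module

lemma symPart_add_skewPart (F : M3) : symPart F + skewPart F = F := by
  simp only [symPart, skewPart]
  module

lemma distSO_one_add_smul_le (G : M3) (t : ℝ) :
    distSO (1 + t • G) ≤
      |t| * ‖symPart G‖ + ‖exp (t • skewPart G) - 1 - t • skewPart G‖ := by
  have hSO : SO3 (exp (t • skewPart G)) := SO3_exp_of_transpose_eq_neg <| by
    rw [transpose_smul, transpose_skewPart, smul_neg]
  have hsplit : 1 + t • G - exp (t • skewPart G) =
      t • symPart G - (exp (t • skewPart G) - 1 - t • skewPart G) := by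
    nth_rw 1 [← symPart_add_skewPart G]
    rw [smul_add]
    abel
  calc distSO (1 + t • G) ≤ ‖1 + t • G - exp (t • skewPart G)‖ := distSO_le_norm_sub _ hSO
    _ ≤ _ := by rw [hsplit, ← Real.norm_eq_abs, ← norm_smul]; exact norm_sub_le _ _

lemma isLittleO_exp_smul_sub_one_sub_smul {𝔸 : Type*} [NormedRing 𝔸] [NormedAlgebra ℝ 𝔸]
    [CompleteSpace 𝔸] (x : 𝔸) :
    (fun t : ℝ => exp (t • x) - 1 - t • x) =o[𝓝 0] id := by
  have h := hasDerivAt_iff_isLittleO.mp (hasDerivAt_exp_smul_const (𝕂 := ℝ) x 0)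
  simp only [zero_smul, exp_zero, one_mul, sub_zero] at h
  exact h

lemma tendsto_div_abs_of_isLittleO {f : ℝ → ℝ} {c : ℝ}
    (h : (fun t => f t - |t| * c) =o[𝓝 0] id) :
    Tendsto (fun t => f t / |t|) (𝓝[≠] 0) (𝓝 c) := by
  have h0 : Tendsto (fun t => (f t - |t| * c) / |t|) (𝓝[≠] 0) (𝓝 0) := by
    have habs := (h.tendsto_div_nhds_zero.mono_left (nhdsWithin_le_nhds (s := {0}ᶜ))).abs
    rw [abs_zero] at habs
    rw [tendsto_zero_iff_abs_tendsto_zero]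
    simpa only [Function.comp_def, abs_div, abs_abs, id] using habs
  refine (h0.const_add c).congr' ?_ |>.trans (by rw [add_zero])
  filter_upwards [self_mem_nhdsWithin] with t ht
  field_simp [abs_ne_zero.mpr ht]
  ring

lemma abs_distSO_one_add_smul_sub_le (G : M3) (t : ℝ) :
    |distSO (1 + t • G) - |t| * ‖symPart G‖| ≤
      2 * ‖G‖ ^ 2 * t ^ 2 + ‖exp (t • skewPart G) - 1 - t • skewPart G‖ := by
  have hlow := le_distSO fun R hR => norm_one_add_smul_sub_ge G t hR
  have hup := distSO_one_add_smul_le G t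
  have hquad : 0 ≤ 2 * ‖G‖ ^ 2 * t ^ 2 := by positivity
  have hrem := norm_nonneg (exp (t • skewPart G) - 1 - t • skewPart G)
  rw [abs_sub_le_iff]
  constructor <;> linarith

/-- For every `G ∈ ℝ^{3×3}`,
`dist(Id + tG, SO(3))/|t| → |sym G|` as `t → 0`. -/
theorem dist_SO3_linearization (G : M3) :
    Tendsto (fun t : ℝ => distSO (1 + t • G) / |t|) (nhdsWithin 0 {(0 : ℝ)}ᶜ)
      (nhds (frob (symPart G))) := by
  rw [frob_eq_norm]
  apply tendsto_div_abs_of_isLittleO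
  have hsmall : (fun t : ℝ => 2 * ‖G‖ ^ 2 * t ^ 2 +
      ‖exp (t • skewPart G) - 1 - t • skewPart G‖) =o[𝓝 0] id :=
    ((isLittleO_pow_id one_lt_two).const_mul_left _).add
      (isLittleO_exp_smul_sub_one_sub_smul (skewPart G)).norm_left
  refine (IsBigO.of_bound' (Eventually.of_forall fun t => ?_)).trans_isLittleO hsmall
  exact (abs_distSO_one_add_smul_sub_le G t).trans (le_abs_self _)
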